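/- Let n ≥ 2 and let x ∈ ℝ^{n+1} with 0 < |x| < 1 and |x|² ≠ x_{n+1}, and write (y, t) = Ψ₁(x) = ( x*/(|x|² − x_{n+1}) , |x|√(1 − |x|²)/||x|² − x_{n+1}| ) where x* = (x₁, …, x_n). If |x − e_{n+1}/2| < 1/2 (x lies inside the sphere S₀) then t² − |y|² > 1, while if |x − e_{n+1}/2| > 1/2 (x lies outside S₀, inside the unit ball) then t² − |y|² < 1. Thus Ψ₁ maps the interior of S₀ into the region above the upper hyperboloid t² − |y|² = 1, t > 0, and the exterior of S₀ in the unit ball into the region below it. -/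

import Mathlib

/-- The center part `y = x*/(|x|² − x_{n+1}) ∈ ℝⁿ` of `Ψ₁(x)`. -/
noncomputable def Psi1Center (n : ℕ) (x : EuclideanSpace ℝ (Fin (n + 1))) :
    EuclideanSpace ℝ (Fin n) :=
  WithLp.toLp 2 (fun i => x i.castSucc / (‖x‖ ^ 2 - x (Fin.last n)))

/-- The radius part `t = |x|√(1 − |x|²)/||x|² − x_{n+1}|` of `Ψ₁(x)`. -/
noncomputable def Psi1Radius (n : ℕ) (x : EuclideanSpace ℝ (Fin (n + 1))) : ℝ :=
  ‖x‖ * Real.sqrt (1 - ‖x‖ ^ 2) / |‖x‖ ^ 2 - x (Fin.last n)|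

/-- The north pole `e_{n+1} = (0, …, 0, 1)`. -/
noncomputable def northPole (n : ℕ) : EuclideanSpace ℝ (Fin (n + 1)) :=
  EuclideanSpace.single (Fin.last n) 1

/-
Write `s = |x|²` and `a = x_{n+1}`. Then `|y|² = (s - a²)/(s - a)²` and `t² = s(1 - s)/(s - a)²`,
so `t² - |y|² = (a² - s²)/(a - s)² = (a + s)/(a - s)`. Since `|x - e_{n+1}/2|² = s - a + 1/4`,
`x` lies inside `S₀` exactly when `a - s > 0`, and then `(a + s)/(a - s) > 1` because `s > 0`;
outside `S₀` the denominator is negative and the inequality flips.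
-/

open RealInnerProductSpace

section HalfSphere

variable {E : Type*} [NormedAddCommGroup E] [InnerProductSpace ℝ E] {e : E}

theorem norm_sub_half_smul_sq (he : ‖e‖ = 1) (x : E) :
    ‖x - (1 / 2 : ℝ) • e‖ ^ 2 = ‖x‖ ^ 2 - ⟪x, e⟫ + 1 / 4 := by
  rw [norm_sub_sq_real, real_inner_smul_right, norm_smul, he]
  norm_num
  ring

theorem norm_sub_half_smul_lt_half_iff (he : ‖e‖ = 1) (x : E) :
    ‖x - (1 / 2 : ℝ) • e‖ < 1 / 2 ↔ ‖x‖ ^ 2 < ⟪x, e⟫ := by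
  rw [← sq_lt_sq₀ (norm_nonneg _) (by norm_num), norm_sub_half_smul_sq he]
  constructor <;> intro h <;> linarith

theorem half_lt_norm_sub_half_smul_iff (he : ‖e‖ = 1) (x : E) :
    1 / 2 < ‖x - (1 / 2 : ℝ) • e‖ ↔ ⟪x, e⟫ < ‖x‖ ^ 2 := by
  rw [← sq_lt_sq₀ (by norm_num) (norm_nonneg _), norm_sub_half_smul_sq he]
  constructor <;> intro h <;> linarith

end HalfSphere

section Psi1

variable {n : ℕ}

theorem norm_northPole : ‖northPole n‖ = 1 := by
  simp [northPole]

theorem inner_northPole_right (x : EuclideanSpace ℝ (Fin (n + 1))) :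
    ⟪x, northPole n⟫ = x (Fin.last n) := by
  simp [northPole, EuclideanSpace.inner_single_right]

theorem EuclideanSpace.norm_sq_eq_sum_castSucc_add_last (x : EuclideanSpace ℝ (Fin (n + 1))) :
    ‖x‖ ^ 2 = ∑ i : Fin n, x i.castSucc ^ 2 + x (Fin.last n) ^ 2 := by
  simp [EuclideanSpace.norm_sq_eq, Fin.sum_univ_castSucc]

theorem norm_Psi1Center_sq (x : EuclideanSpace ℝ (Fin (n + 1))) :
    ‖Psi1Center n x‖ ^ 2 =
      (‖x‖ ^ 2 - x (Fin.last n) ^ 2) / (‖x‖ ^ 2 - x (Fin.last n)) ^ 2 := by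
  simp only [EuclideanSpace.norm_sq_eq, Psi1Center, Real.norm_eq_abs, sq_abs,
    div_pow, ← Finset.sum_div, EuclideanSpace.norm_sq_eq_sum_castSucc_add_last x]
  ring

theorem Psi1Radius_sq {x : EuclideanSpace ℝ (Fin (n + 1))} (hx : ‖x‖ ≤ 1) :
    Psi1Radius n x ^ 2 = ‖x‖ ^ 2 * (1 - ‖x‖ ^ 2) / (‖x‖ ^ 2 - x (Fin.last n)) ^ 2 := by
  have : 0 ≤ 1 - ‖x‖ ^ 2 := by nlinarith [norm_nonneg x]
  rw [Psi1Radius, div_pow, mul_pow, Real.sq_sqrt this, sq_abs]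

/-- The identity needs no hypothesis `|x|² ≠ x_{n+1}`: at such points both sides are `0`
by the convention `_ / 0 = 0`. -/
theorem Psi1Radius_sq_sub_norm_Psi1Center_sq {x : EuclideanSpace ℝ (Fin (n + 1))}
    (hx : ‖x‖ ≤ 1) :
    Psi1Radius n x ^ 2 - ‖Psi1Center n x‖ ^ 2 =
      (x (Fin.last n) + ‖x‖ ^ 2) / (x (Fin.last n) - ‖x‖ ^ 2) := by
  set a := x (Fin.last n)
  set s := ‖x‖ ^ 2
  rw [Psi1Radius_sq hx, norm_Psi1Center_sq, ← sub_div,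
    show s * (1 - s) - (s - a ^ 2) = (a - s) * (a + s) by ring,
    show (s - a) ^ 2 = (a - s) * (a - s) by ring]
  rcases eq_or_ne (a - s) 0 with hd | hd
  · simp [hd]
  · exact mul_div_mul_left _ _ hd

end Psi1

theorem stmt11_general (n : ℕ) (x : EuclideanSpace ℝ (Fin (n + 1)))
    (hx0 : 0 < ‖x‖) (hx1 : ‖x‖ < 1) :
    (‖x - (1 / 2 : ℝ) • northPole n‖ < 1 / 2 →
      1 < Psi1Radius n x ^ 2 - ‖Psi1Center n x‖ ^ 2) ∧
    (1 / 2 < ‖x - (1 / 2 : ℝ) • northPole n‖ →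
      Psi1Radius n x ^ 2 - ‖Psi1Center n x‖ ^ 2 < 1) := by
  rw [Psi1Radius_sq_sub_norm_Psi1Center_sq hx1.le,
    norm_sub_half_smul_lt_half_iff norm_northPole, half_lt_norm_sub_half_smul_iff norm_northPole,
    inner_northPole_right]
  have hs : 0 < ‖x‖ ^ 2 := by positivity
  refine ⟨fun hin => ?_, fun hout => ?_⟩
  · rw [one_lt_div (sub_pos.mpr hin)]
    linarith
  · rw [div_lt_one_of_neg (sub_neg.mpr hout)]
    linarith

/-- `Ψ₁` maps the interior of the sphere `S₀` (center `e_{n+1}/2`, radius `1/2`) into the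
region above the upper hyperboloid `t² − |y|² = 1`, `t > 0`, and the exterior of `S₀` inside
the unit ball into the region below it. -/
theorem stmt11 (n : ℕ) (hn : 2 ≤ n) (x : EuclideanSpace ℝ (Fin (n + 1)))
    (hx0 : 0 < ‖x‖) (hx1 : ‖x‖ < 1) (hxS : ‖x‖ ^ 2 ≠ x (Fin.last n)) :
    (‖x - (1 / 2 : ℝ) • northPole n‖ < 1 / 2 →
      1 < Psi1Radius n x ^ 2 - ‖Psi1Center n x‖ ^ 2) ∧
    (1 / 2 < ‖x - (1 / 2 : ℝ) • northPole n‖ →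
      Psi1Radius n x ^ 2 - ‖Psi1Center n x‖ ^ 2 < 1) :=
  stmt11_general n x hx0 hx1
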